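/- The map p ↦ q*(p), assigning to each p ∈ (1, ∞) the unique root in (0,1) of 2E_{1,p}(q) = K_{1,p}(q), is strictly increasing; moreover q*(p) → 1/√2 as p ↓ 1 and q*(p) → 1 as p → ∞. -/

import Mathlib

open Real Filter

/-- The complete `p`-elliptic integral of the first kind. -/
noncomputable def K1 (p q : ℝ) : ℝ :=
  ∫ z in (0:ℝ)..1, (1 - q ^ 2 * z ^ 2) ^ (-(1/2) : ℝ) * (1 - z ^ 2) ^ (-(1 / p))

/-- The complete `p`-elliptic integral of the second kind. -/
noncomputable def E1 (p q : ℝ) : ℝ :=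
  ∫ z in (0:ℝ)..1, (1 - q ^ 2 * z ^ 2) ^ ((1/2) : ℝ) * (1 - z ^ 2) ^ (-(1 / p))

/-!
`2 E1 p q - K1 p q = ellipticGap p q = ∫₀¹ H_q w_p`, where
`H_q(z) = gapKernel (1 - q²z²) = 2√(1 - q²z²) - 1/√(1 - q²z²)` and `w_p(z) = (1 - z²)^(-1/p)`.
This is antitone in `q`, so `q*(p)` lies below every `q` where it is negative and above every
`q` where it is positive. `H_q` has the sign of `1 - 2q²z²`, so the integral is positive for
`q² ≤ 1/2`, whence `q*(p) > 1/√2`. For `p' < p` write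
`w_{p'} = w_p (1 - z²)^e` with `e < 0`; if `c` is the value of `(1 - z²)^e` at the zero `z₀` of
`H_q`, then `H_q ((1 - z²)^e - c) < 0` off `z₀`, so the integral for `p'` is below `c` times
the one for `p`: this gives strict monotonicity. As `p → ∞`, `w_p → 1` in `L¹` and the integral
tends to `∫₀¹ H_q = √(1 - q²) > 0`. As `p ↓ 1`, the mass of `w_p` near `z = 1`, where `H_q < 0`
once `q² > 1/2`, grows like `1 / (1 - 1/p)`, and the integral tends to `-∞`.
-/

open MeasureTheory Set Topology
open scoped Interval

theorem intervalIntegral_pos_of_pos_on_of_ne {f : ℝ → ℝ} {a b c : ℝ}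
    (hfi : IntervalIntegrable f volume a b) (hpos : ∀ x ∈ Ioo a b, x ≠ c → 0 < f x)
    (hab : a < b) : 0 < ∫ x in a..b, f x := by
  have hae : ∀ᵐ x ∂volume.restrict (Ι a b), x ∈ Ioo a b \ {c} := by
    rw [uIoc_of_le hab.le]
    refine ae_restrict_of_ae_eq_of_ae_restrict Ioo_ae_eq_Ioc ?_
    filter_upwards [ae_restrict_mem measurableSet_Ioo,
      ae_restrict_of_ae (Measure.ae_ne volume c)] with x hx hxc using ⟨hx, hxc⟩
  rw [intervalIntegral.integral_pos_iff_support_of_nonneg_ae'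
    (hae.mono fun x hx => (hpos x hx.1 hx.2).le) hfi]
  refine ⟨hab, ?_⟩
  calc (0 : ENNReal) < volume (Ioo a b \ {c}) := by
        rw [measure_sdiff_null (measure_singleton c)]; simpa using hab
    _ ≤ volume (Function.support f ∩ Ioc a b) := measure_mono fun x hx =>
        ⟨(hpos x hx.1 hx.2).ne', Ioo_subset_Ioc_self hx.1⟩

section OneSubSqRpow

variable {e : ℝ}

theorem one_sub_sq_rpow_eq {z : ℝ} (hz : z ∈ Icc (-1 : ℝ) 1) :
    (1 - z ^ 2) ^ e = (1 - z) ^ e * (1 + z) ^ e := by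
  rw [← mul_rpow (by linarith [hz.2]) (by linarith [hz.1])]
  ring_nf

theorem intervalIntegrable_one_sub_rpow (he : -1 < e) (a : ℝ) :
    IntervalIntegrable (fun z => (1 - z) ^ e) volume a 1 := by
  simpa using
    (intervalIntegral.intervalIntegrable_rpow' he (a := 1 - a) (b := 0)).comp_sub_left 1

theorem integral_one_sub_rpow (he : -1 < e) (a : ℝ) :
    ∫ z in a..1, (1 - z) ^ e = (1 - a) ^ (e + 1) / (e + 1) := by
  rw [intervalIntegral.integral_comp_sub_left (fun x => x ^ e), sub_self,
    integral_rpow (Or.inl he), zero_rpow (by linarith)]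
  ring

theorem intervalIntegrable_one_sub_sq_rpow (he : -1 < e) :
    IntervalIntegrable (fun z => (1 - z ^ 2) ^ e) volume 0 1 := by
  have hcont : ContinuousOn (fun z : ℝ => (1 + z) ^ e) (uIcc 0 1) := by
    refine ContinuousOn.rpow_const (by fun_prop) fun z hz => Or.inl ?_
    rw [uIcc_of_le zero_le_one] at hz
    linarith [hz.1]
  refine (intervalIntegrable_congr fun z hz => ?_).1
    ((intervalIntegrable_one_sub_rpow he 0).continuousOn_mul hcont)
  rw [uIoc_of_le zero_le_one] at hz
  rw [one_sub_sq_rpow_eq ⟨by linarith [hz.1], hz.2⟩, mul_comm]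

theorem intervalIntegrable_mul_one_sub_sq_rpow {g : ℝ → ℝ} (hg : ContinuousOn g (Icc 0 1))
    (he : -1 < e) : IntervalIntegrable (fun z => g z * (1 - z ^ 2) ^ e) volume 0 1 :=
  (intervalIntegrable_one_sub_sq_rpow he).continuousOn_mul (by rwa [uIcc_of_le zero_le_one])

theorem integral_one_sub_sq_rpow_le (he : -1 < e) (he0 : e ≤ 0) :
    ∫ z in (0:ℝ)..1, (1 - z ^ 2) ^ e ≤ (e + 1)⁻¹ := by
  calc ∫ z in (0:ℝ)..1, (1 - z ^ 2) ^ e ≤ ∫ z in (0:ℝ)..1, (1 - z) ^ e := by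
        refine intervalIntegral.integral_mono_on zero_le_one
          (intervalIntegrable_one_sub_sq_rpow he) (intervalIntegrable_one_sub_rpow he 0)
          fun z hz => ?_
        rw [one_sub_sq_rpow_eq ⟨by linarith [hz.1], hz.2⟩]
        exact mul_le_of_le_one_right (rpow_nonneg (by linarith [hz.2]) _)
          (rpow_le_one_of_one_le_of_nonpos (by linarith [hz.1]) he0)
    _ = (e + 1)⁻¹ := by rw [integral_one_sub_rpow he]; simp

theorem le_integral_one_sub_sq_rpow (he : -1 < e) (he0 : e ≤ 0) {a : ℝ}
    (ha : a ∈ Icc (0:ℝ) 1) : (1 - a) / (2 * (e + 1)) ≤ ∫ z in a..1, (1 - z ^ 2) ^ e := by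
  have he1 : 0 < e + 1 := by linarith
  have hint : IntervalIntegrable (fun z => (1 - z ^ 2) ^ e) volume a 1 :=
    (intervalIntegrable_one_sub_sq_rpow he).mono_set <| by
      rw [uIcc_of_le ha.2, uIcc_of_le zero_le_one]; exact Icc_subset_Icc_left ha.1
  calc (1 - a) / (2 * (e + 1)) ≤ (1 - a) ^ (e + 1) / (e + 1) / 2 := by
        rw [div_div, mul_comm (e + 1)]
        gcongr
        simpa using rpow_le_rpow_of_exponent_ge' (sub_nonneg.2 ha.2) (by linarith [ha.1])
          he1.le (by linarith : e + 1 ≤ 1)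
    _ = ∫ z in a..1, (1 - z) ^ e / 2 := by
        rw [intervalIntegral.integral_div, integral_one_sub_rpow he]
    _ ≤ _ := intervalIntegral.integral_mono_on ha.2
        ((intervalIntegrable_one_sub_rpow he a).div_const 2) hint fun z hz => ?_
  have h2 : (2 : ℝ)⁻¹ ≤ (1 + z) ^ e :=
    calc (2 : ℝ)⁻¹ = 2 ^ (-1 : ℝ) := (rpow_neg_one 2).symm
      _ ≤ 2 ^ e := rpow_le_rpow_of_exponent_le one_le_two he.le
      _ ≤ (1 + z) ^ e :=
        rpow_le_rpow_of_nonpos (by linarith [ha.1, hz.1]) (by linarith [hz.2]) he0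
  rw [one_sub_sq_rpow_eq ⟨by linarith [ha.1, hz.1], hz.2⟩, div_eq_mul_inv]
  exact mul_le_mul_of_nonneg_left h2 (rpow_nonneg (by linarith [hz.2]) _)

end OneSubSqRpow

noncomputable def gapKernel (s : ℝ) : ℝ := 2 * s ^ ((1/2) : ℝ) - s ^ (-(1/2) : ℝ)

section GapKernel

variable {s : ℝ}

theorem gapKernel_eq (hs : 0 < s) : gapKernel s = (2 * s - 1) / √s := by
  have hsq : 0 < √s := sqrt_pos.2 hs
  rw [gapKernel, ← sqrt_eq_rpow, rpow_neg hs.le, ← sqrt_eq_rpow]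
  field_simp
  rw [sq_sqrt hs.le]

theorem gapKernel_pos (h : 1/2 < s) : 0 < gapKernel s := by
  rw [gapKernel_eq (by linarith)]
  exact div_pos (by linarith) (sqrt_pos.2 (by linarith))

theorem gapKernel_neg (hs : 0 < s) (h : s < 1/2) : gapKernel s < 0 := by
  rw [gapKernel_eq hs]
  exact div_neg_of_neg_of_pos (by linarith) (sqrt_pos.2 hs)

theorem gapKernel_monotoneOn : MonotoneOn gapKernel (Ioi 0) := fun s hs t _ hst => by
  have h1 := rpow_le_rpow (le_of_lt hs) hst (by norm_num : (0 : ℝ) ≤ 1/2)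
  have h2 := rpow_le_rpow_of_nonpos hs hst (by norm_num : -(1/2 : ℝ) ≤ 0)
  simp only [gapKernel]
  linarith

theorem gapKernel_le_one (hs : 0 < s) (hs1 : s ≤ 1) : gapKernel s ≤ 1 := by
  have h1 : gapKernel 1 = 1 := by norm_num [gapKernel]
  exact h1 ▸ gapKernel_monotoneOn hs (mem_Ioi.2 one_pos) hs1

theorem abs_gapKernel_le {m : ℝ} (hm : 0 < m) (hms : m ≤ s) (hs1 : s ≤ 1) :
    |gapKernel s| ≤ m ^ (-(1/2) : ℝ) := by
  have hge : gapKernel m ≤ gapKernel s := gapKernel_monotoneOn hm (hm.trans_le hms) hms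
  have hm_le : -m ^ (-(1/2) : ℝ) ≤ gapKernel m := by
    simp only [gapKernel]
    linarith [rpow_nonneg hm.le ((1/2) : ℝ)]
  have hone : 1 ≤ m ^ (-(1/2) : ℝ) :=
    one_le_rpow_of_pos_of_le_one_of_nonpos hm (hms.trans hs1) (by norm_num)
  rw [abs_le]
  constructor <;> linarith [gapKernel_le_one (hm.trans_le hms) hs1]

theorem hasDerivAt_mul_sqrt_one_sub_sq_mul_sq {q z : ℝ} (hz : 0 < 1 - q ^ 2 * z ^ 2) :
    HasDerivAt (fun z => z * √(1 - q ^ 2 * z ^ 2)) (gapKernel (1 - q ^ 2 * z ^ 2)) z := by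
  refine ((hasDerivAt_id' z).mul
    ((((hasDerivAt_pow 2 z).const_mul (q ^ 2)).const_sub 1).sqrt hz.ne')).congr_deriv ?_
  rw [gapKernel_eq hz]
  have hsq : 0 < √(1 - q ^ 2 * z ^ 2) := sqrt_pos.2 hz
  field_simp
  rw [sq_sqrt hz.le]
  simp
  ring

end GapKernel

noncomputable def ellipticGap (p q : ℝ) : ℝ :=
  ∫ z in (0:ℝ)..1, gapKernel (1 - q ^ 2 * z ^ 2) * (1 - z ^ 2) ^ (-(1 / p))

section EllipticGap

variable {p q : ℝ}

theorem neg_one_div_mem_Ioo (hp : 1 < p) : -(1 / p) ∈ Ioo (-1 : ℝ) 0 := by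
  have h1 : 1 / p < 1 := (div_lt_one (by linarith)).2 hp
  have h0 : 0 < 1 / p := by positivity
  constructor <;> linarith

theorem one_sub_sq_mul_sq_pos (hq : q ^ 2 < 1) {z : ℝ} (hz : z ∈ Icc (0:ℝ) 1) :
    0 < 1 - q ^ 2 * z ^ 2 := by
  have : z ^ 2 ≤ 1 := pow_le_one₀ hz.1 hz.2
  nlinarith [sq_nonneg q]

theorem continuousOn_one_sub_sq_mul_sq_rpow (hq : q ^ 2 < 1) (r : ℝ) :
    ContinuousOn (fun z => (1 - q ^ 2 * z ^ 2) ^ r) (Icc 0 1) :=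
  ContinuousOn.rpow_const (by fun_prop) fun _ hz => Or.inl (one_sub_sq_mul_sq_pos hq hz).ne'

theorem continuousOn_gapKernel_one_sub_sq_mul_sq (hq : q ^ 2 < 1) :
    ContinuousOn (fun z => gapKernel (1 - q ^ 2 * z ^ 2)) (Icc 0 1) :=
  (continuousOn_const.mul (continuousOn_one_sub_sq_mul_sq_rpow hq _)).sub
    (continuousOn_one_sub_sq_mul_sq_rpow hq _)

theorem intervalIntegrable_ellipticGap_integrand (hp : 1 < p) (hq : q ^ 2 < 1) :
    IntervalIntegrable (fun z => gapKernel (1 - q ^ 2 * z ^ 2) * (1 - z ^ 2) ^ (-(1 / p)))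
      volume 0 1 :=
  intervalIntegrable_mul_one_sub_sq_rpow (continuousOn_gapKernel_one_sub_sq_mul_sq hq)
    (neg_one_div_mem_Ioo hp).1

theorem ellipticGap_eq (hp : 1 < p) (hq : q ^ 2 < 1) :
    ellipticGap p q = 2 * E1 p q - K1 p q := by
  have hint r := intervalIntegrable_mul_one_sub_sq_rpow
    (continuousOn_one_sub_sq_mul_sq_rpow hq r) (neg_one_div_mem_Ioo hp).1
  rw [E1, K1, ← intervalIntegral.integral_const_mul,
    ← intervalIntegral.integral_sub ((hint _).const_mul 2) (hint _), ellipticGap]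
  congr 1 with z
  rw [gapKernel]
  ring

theorem integral_gapKernel (hq : q ^ 2 < 1) :
    ∫ z in (0:ℝ)..1, gapKernel (1 - q ^ 2 * z ^ 2) = √(1 - q ^ 2) := by
  rw [intervalIntegral.integral_eq_sub_of_hasDerivAt
    (fun z hz => hasDerivAt_mul_sqrt_one_sub_sq_mul_sq
      (one_sub_sq_mul_sq_pos hq (by rwa [uIcc_of_le zero_le_one] at hz)))
    ((continuousOn_gapKernel_one_sub_sq_mul_sq hq).intervalIntegrable_of_Icc zero_le_one)]
  simp

theorem ellipticGap_antitoneOn (hp : 1 < p) : AntitoneOn (ellipticGap p) (Ico 0 1) := by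
  intro q₁ hq₁ q₂ hq₂ hq
  have hsq {r : ℝ} (hr : r ∈ Ico (0:ℝ) 1) : r ^ 2 < 1 := pow_lt_one₀ hr.1 hr.2 two_ne_zero
  refine intervalIntegral.integral_mono_on zero_le_one
    (intervalIntegrable_ellipticGap_integrand hp (hsq hq₂))
    (intervalIntegrable_ellipticGap_integrand hp (hsq hq₁)) fun z hz => ?_
  have hqz : q₁ ^ 2 * z ^ 2 ≤ q₂ ^ 2 * z ^ 2 := by gcongr; exact hq₁.1
  refine mul_le_mul_of_nonneg_right (gapKernel_monotoneOn ?_ ?_ (by linarith))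
    (rpow_nonneg (by nlinarith [hz.1, hz.2]) _)
  exacts [one_sub_sq_mul_sq_pos (hsq hq₂) hz, one_sub_sq_mul_sq_pos (hsq hq₁) hz]

theorem ellipticGap_pos (hp : 1 < p) (hq : q ^ 2 ≤ 1/2) : 0 < ellipticGap p q := by
  refine intervalIntegral.intervalIntegral_pos_of_pos_on
    (intervalIntegrable_ellipticGap_integrand hp (by linarith))
    (fun z hz => mul_pos (gapKernel_pos ?_) (rpow_pos_of_pos ?_ _)) one_pos
  · nlinarith [hz.1, hz.2, sq_nonneg q, sq_nonneg z]
  · nlinarith [hz.1, hz.2]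

theorem ellipticGap_neg_of_lt {p' : ℝ} (hp' : 1 < p') (hpp : p' < p) (hq : 1/2 < q ^ 2)
    (hq1 : q ^ 2 < 1) (hG : ellipticGap p q ≤ 0) : ellipticGap p' q < 0 := by
  have hp : 1 < p := hp'.trans hpp
  set e := 1 / p - 1 / p'
  have he : e < 0 := sub_neg.2 (one_div_lt_one_div_of_lt (by linarith) hpp)
  set z₀ := √((2 * q ^ 2)⁻¹)
  have hz₀ : q ^ 2 * z₀ ^ 2 = 1/2 := by
    have : q ≠ 0 := by rintro rfl; norm_num at hq
    rw [sq_sqrt (by positivity)]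
    field_simp
  have hz₀0 : 0 < z₀ := sqrt_pos.2 (by positivity)
  have hz₀1 : z₀ ^ 2 < 1 := by nlinarith
  set c := (1 - z₀ ^ 2) ^ e
  have hsign : ∀ z ∈ Ioo (0:ℝ) 1, z ≠ z₀ →
      gapKernel (1 - q ^ 2 * z ^ 2) * ((1 - z ^ 2) ^ e - c) < 0 := by
    intro z hz hne
    rcases hne.lt_or_gt with h | h
    · have hzz : z ^ 2 < z₀ ^ 2 := by gcongr; exact hz.1.le
      exact mul_neg_of_pos_of_neg (gapKernel_pos (by nlinarith))
        (sub_neg.2 (rpow_lt_rpow_of_neg (by linarith) (by linarith) he))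
    · have hzz : z₀ ^ 2 < z ^ 2 := by gcongr
      exact mul_neg_of_neg_of_pos (gapKernel_neg (by nlinarith [hz.1, hz.2]) (by nlinarith))
        (sub_pos.2 (rpow_lt_rpow_of_neg (by nlinarith [hz.1, hz.2]) (by linarith) he))
  have hint p (hp : 1 < p) := intervalIntegrable_ellipticGap_integrand hp hq1
  have hdiff : ellipticGap p' q - c * ellipticGap p q < 0 := by
    rw [ellipticGap, ellipticGap, ← intervalIntegral.integral_const_mul,
      ← intervalIntegral.integral_sub (hint p' hp') ((hint p hp).const_mul c), ← neg_pos,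
      ← intervalIntegral.integral_neg]
    refine intervalIntegral_pos_of_pos_on_of_ne (c := z₀)
      ((hint p' hp').sub ((hint p hp).const_mul c)).neg (fun z hz hne => ?_) one_pos
    have hb : 0 < 1 - z ^ 2 := by nlinarith [hz.1, hz.2]
    have := mul_pos (neg_pos.2 (hsign z hz hne)) (rpow_pos_of_pos hb (-(1 / p)))
    rw [show -(1 / p') = -(1 / p) + e by ring, rpow_add hb]
    linarith
  linarith [mul_nonpos_of_nonneg_of_nonpos (rpow_nonneg (by linarith) e : 0 ≤ c) hG]

theorem integral_gapKernel_mul_le_integral_inv (hp : 1 < p) (hq : q ^ 2 < 1) {z₁ : ℝ}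
    (hz₁ : z₁ ∈ Ioo (0:ℝ) 1) :
    ∫ z in (0:ℝ)..z₁, gapKernel (1 - q ^ 2 * z ^ 2) * (1 - z ^ 2) ^ (-(1 / p))
      ≤ ∫ z in (0:ℝ)..z₁, (1 - z ^ 2) ^ (-1 : ℝ) := by
  have hsub : uIcc 0 z₁ ⊆ uIcc 0 1 :=
    uIcc_subset_uIcc left_mem_uIcc (mem_uIcc_of_le hz₁.1.le hz₁.2.le)
  refine intervalIntegral.integral_mono_on hz₁.1.le
    ((intervalIntegrable_ellipticGap_integrand hp hq).mono_set hsub)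
    (ContinuousOn.intervalIntegrable_of_Icc hz₁.1.le
      (ContinuousOn.rpow_const (by fun_prop) fun z hz => Or.inl ?_)) fun z hz => ?_
  · nlinarith [hz.1, hz.2, hz₁.2]
  have hb : 0 < 1 - z ^ 2 := by nlinarith [hz.1, hz.2, hz₁.2]
  have hK := gapKernel_le_one (one_sub_sq_mul_sq_pos hq ⟨hz.1, hz.2.trans hz₁.2.le⟩)
    (by nlinarith [sq_nonneg q, sq_nonneg z])
  calc gapKernel (1 - q ^ 2 * z ^ 2) * (1 - z ^ 2) ^ (-(1 / p)) ≤ (1 - z ^ 2) ^ (-(1 / p)) :=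
        mul_le_of_le_one_left (rpow_nonneg hb.le _) hK
    _ ≤ (1 - z ^ 2) ^ (-1 : ℝ) :=
        rpow_le_rpow_of_exponent_ge hb (by nlinarith [sq_nonneg z])
          (neg_one_div_mem_Ioo hp).1.le

theorem integral_gapKernel_mul_le (hp : 1 < p) (hq : q ^ 2 < 1) {z₁ : ℝ}
    (hz₁ : z₁ ∈ Ioo (0:ℝ) 1) (hK₁ : gapKernel (1 - q ^ 2 * z₁ ^ 2) ≤ 0) :
    ∫ z in z₁..1, gapKernel (1 - q ^ 2 * z ^ 2) * (1 - z ^ 2) ^ (-(1 / p))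
      ≤ gapKernel (1 - q ^ 2 * z₁ ^ 2) * (1 - z₁) / 2 * (1 - 1 / p)⁻¹ := by
  have he := neg_one_div_mem_Ioo hp
  have hsub : uIcc z₁ 1 ⊆ uIcc 0 1 :=
    uIcc_subset_uIcc (mem_uIcc_of_le hz₁.1.le hz₁.2.le) right_mem_uIcc
  have hW := (intervalIntegrable_one_sub_sq_rpow he.1).mono_set hsub
  calc ∫ z in z₁..1, gapKernel (1 - q ^ 2 * z ^ 2) * (1 - z ^ 2) ^ (-(1 / p))
      ≤ ∫ z in z₁..1, gapKernel (1 - q ^ 2 * z₁ ^ 2) * (1 - z ^ 2) ^ (-(1 / p)) := by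
        refine intervalIntegral.integral_mono_on hz₁.2.le
          ((intervalIntegrable_ellipticGap_integrand hp hq).mono_set hsub) (hW.const_mul _)
          fun z hz => ?_
        have hz0 : 0 ≤ z := hz₁.1.le.trans hz.1
        refine mul_le_mul_of_nonneg_right (gapKernel_monotoneOn
          (one_sub_sq_mul_sq_pos hq ⟨hz0, hz.2⟩) (one_sub_sq_mul_sq_pos hq ⟨hz₁.1.le, hz₁.2.le⟩)
          ?_) (rpow_nonneg (by nlinarith [hz.2]) _)
        have : z₁ ^ 2 ≤ z ^ 2 := by gcongr; exacts [hz₁.1.le, hz.1]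
        nlinarith [sq_nonneg q]
    _ = gapKernel (1 - q ^ 2 * z₁ ^ 2) * ∫ z in z₁..1, (1 - z ^ 2) ^ (-(1 / p)) :=
        intervalIntegral.integral_const_mul _ _
    _ ≤ gapKernel (1 - q ^ 2 * z₁ ^ 2) * ((1 - z₁) / (2 * (-(1 / p) + 1))) :=
        mul_le_mul_of_nonpos_left
          (le_integral_one_sub_sq_rpow he.1 he.2.le ⟨hz₁.1.le, hz₁.2.le⟩) hK₁
    _ = _ := by
        rw [neg_add_eq_sub, div_mul_eq_div_div_swap, div_eq_mul_inv _ (1 - 1 / p)]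
        ring

theorem ellipticGap_le (hp : 1 < p) (hq : q ^ 2 < 1) {z₁ : ℝ} (hz₁ : z₁ ∈ Ioo (0:ℝ) 1)
    (hK₁ : gapKernel (1 - q ^ 2 * z₁ ^ 2) ≤ 0) :
    ellipticGap p q ≤ (∫ z in (0:ℝ)..z₁, (1 - z ^ 2) ^ (-1 : ℝ))
      + gapKernel (1 - q ^ 2 * z₁ ^ 2) * (1 - z₁) / 2 * (1 - 1 / p)⁻¹ := by
  have hint := intervalIntegrable_ellipticGap_integrand hp hq
  have hz₁I : z₁ ∈ uIcc (0:ℝ) 1 := mem_uIcc_of_le hz₁.1.le hz₁.2.le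
  rw [ellipticGap, ← intervalIntegral.integral_add_adjacent_intervals
    (hint.mono_set (uIcc_subset_uIcc left_mem_uIcc hz₁I))
    (hint.mono_set (uIcc_subset_uIcc hz₁I right_mem_uIcc))]
  exact add_le_add (integral_gapKernel_mul_le_integral_inv hp hq hz₁)
    (integral_gapKernel_mul_le hp hq hz₁ hK₁)

theorem tendsto_ellipticGap_nhdsGT_one (hq : 1/2 < q ^ 2) (hq1 : q ^ 2 < 1) :
    Tendsto (ellipticGap · q) (𝓝[>] 1) atBot := by
  obtain ⟨z₁, ⟨hqz, hz₁0⟩, hz₁1⟩ : ∃ z, (1/2 < q ^ 2 * z ^ 2 ∧ 0 < z) ∧ z < 1 := by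
    have hcont : Tendsto (fun z : ℝ => q ^ 2 * z ^ 2) (𝓝 1) (𝓝 (q ^ 2)) := by
      simpa using (by fun_prop : Continuous fun z : ℝ => q ^ 2 * z ^ 2).tendsto 1
    have hev : ∀ᶠ z in 𝓝[<] (1:ℝ), 1/2 < q ^ 2 * z ^ 2 ∧ 0 < z :=
      ((hcont.eventually (lt_mem_nhds hq)).and (lt_mem_nhds one_pos)).filter_mono
        nhdsWithin_le_nhds
    exact (hev.and self_mem_nhdsWithin).exists
  have hK₁ : gapKernel (1 - q ^ 2 * z₁ ^ 2) < 0 :=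
    gapKernel_neg (one_sub_sq_mul_sq_pos hq1 ⟨hz₁0.le, hz₁1.le⟩) (by linarith)
  have hK : gapKernel (1 - q ^ 2 * z₁ ^ 2) * (1 - z₁) / 2 < 0 :=
    div_neg_of_neg_of_pos (mul_neg_of_neg_of_pos hK₁ (by linarith)) two_pos
  have hinv : Tendsto (fun p : ℝ => (1 - 1 / p)⁻¹) (𝓝[>] 1) atTop := by
    refine tendsto_inv_nhdsGT_zero.comp (tendsto_nhdsWithin_iff.2 ⟨?_, ?_⟩)
    · have : ContinuousAt (fun p : ℝ => 1 - 1 / p) 1 :=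
        continuousAt_const.sub (continuousAt_const.div continuousAt_id one_ne_zero)
      simpa using this.tendsto.mono_left nhdsWithin_le_nhds
    · filter_upwards [self_mem_nhdsWithin] with p (hp : 1 < p)
      simpa using (div_lt_one (by linarith)).2 hp
  refine tendsto_atBot_mono' _ ?_ (tendsto_atBot_add_const_left _
    (∫ z in (0:ℝ)..z₁, (1 - z ^ 2) ^ (-1 : ℝ)) (hinv.const_mul_atTop_of_neg hK))
  filter_upwards [self_mem_nhdsWithin] with p hp
  exact ellipticGap_le hp hq1 ⟨hz₁0, hz₁1⟩ hK₁.le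

theorem abs_ellipticGap_sub_le (hp : 1 < p) (hq : q ^ 2 < 1) :
    |ellipticGap p q - √(1 - q ^ 2)| ≤ (1 - q ^ 2) ^ (-(1/2) : ℝ) * ((1 - 1 / p)⁻¹ - 1) := by
  have he := neg_one_div_mem_Ioo hp
  have hW := intervalIntegrable_one_sub_sq_rpow he.1
  have hK := (continuousOn_gapKernel_one_sub_sq_mul_sq hq).intervalIntegrable_of_Icc
    (μ := volume) zero_le_one
  have hKW : IntervalIntegrable
      (fun z => gapKernel (1 - q ^ 2 * z ^ 2) * ((1 - z ^ 2) ^ (-(1 / p)) - 1)) volume 0 1 := by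
    simpa only [mul_sub, mul_one] using (intervalIntegrable_ellipticGap_integrand hp hq).sub hK
  have hdiff : ellipticGap p q - √(1 - q ^ 2)
      = ∫ z in (0:ℝ)..1, gapKernel (1 - q ^ 2 * z ^ 2) * ((1 - z ^ 2) ^ (-(1 / p)) - 1) := by
    rw [← integral_gapKernel hq, ellipticGap,
      ← intervalIntegral.integral_sub (intervalIntegrable_ellipticGap_integrand hp hq) hK]
    simp only [mul_sub, mul_one]
  set M := (1 - q ^ 2) ^ (-(1/2) : ℝ)
  rw [hdiff]
  calc _ ≤ ∫ z in (0:ℝ)..1,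
        |gapKernel (1 - q ^ 2 * z ^ 2) * ((1 - z ^ 2) ^ (-(1 / p)) - 1)| :=
          intervalIntegral.abs_integral_le_integral_abs zero_le_one
    _ ≤ ∫ z in (0:ℝ)..1, M * ((1 - z ^ 2) ^ (-(1 / p)) - 1) := by
        refine intervalIntegral.integral_mono_on_of_le_Ioo zero_le_one hKW.abs
          ((hW.sub intervalIntegrable_const).const_mul M) fun z hz => ?_
        have hb : 0 < 1 - z ^ 2 := by nlinarith [hz.1, hz.2]
        have hW1 : 0 ≤ (1 - z ^ 2) ^ (-(1 / p)) - 1 := sub_nonneg.2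
          (one_le_rpow_of_pos_of_le_one_of_nonpos hb (by nlinarith) he.2.le)
        rw [abs_mul, abs_of_nonneg hW1]
        exact mul_le_mul_of_nonneg_right (abs_gapKernel_le (by linarith)
          (by nlinarith [hz.1, hz.2]) (by nlinarith [sq_nonneg q])) hW1
    _ = M * ((∫ z in (0:ℝ)..1, (1 - z ^ 2) ^ (-(1 / p))) - 1) := by
        rw [intervalIntegral.integral_const_mul,
          intervalIntegral.integral_sub hW intervalIntegrable_const]
        simp
    _ ≤ M * ((1 - 1 / p)⁻¹ - 1) := by
        refine mul_le_mul_of_nonneg_left (sub_le_sub_right ?_ 1) (rpow_nonneg (by linarith) _)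
        simpa [neg_add_eq_sub] using integral_one_sub_sq_rpow_le he.1 he.2.le

theorem tendsto_ellipticGap_atTop (hq : q ^ 2 < 1) :
    Tendsto (ellipticGap · q) atTop (𝓝 √(1 - q ^ 2)) := by
  have hlim : Tendsto (fun p : ℝ => (1 - q ^ 2) ^ (-(1/2) : ℝ) * ((1 - 1 / p)⁻¹ - 1)) atTop
      (𝓝 0) := by
    have : Tendsto (fun p : ℝ => 1 - 1 / p) atTop (𝓝 1) := by
      simpa using
        tendsto_const_nhds.sub ((tendsto_const_nhds (x := (1:ℝ))).div_atTop tendsto_id)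
    simpa using ((this.inv₀ one_ne_zero).sub_const 1).const_mul ((1 - q ^ 2) ^ (-(1/2) : ℝ))
  refine tendsto_iff_norm_sub_tendsto_zero.2
    (squeeze_zero' (Eventually.of_forall fun _ => norm_nonneg _) ?_ hlim)
  filter_upwards [eventually_gt_atTop 1] with p hp using abs_ellipticGap_sub_le hp hq

end EllipticGap

theorem one_div_sqrt_two_lt_iff {x : ℝ} (hx : 0 < x) : 1 / √2 < x ↔ 1 / 2 < x ^ 2 := by
  rw [one_div, ← sqrt_inv, sqrt_lt' hx, one_div]

theorem qstar_strictMono_and_limits (f : ℝ → ℝ)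
    (hf : ∀ p, 1 < p → f p ∈ Set.Ioo (0:ℝ) 1 ∧ 2 * E1 p (f p) = K1 p (f p)) :
    StrictMonoOn f (Set.Ioi (1:ℝ)) ∧
    Tendsto f (nhdsWithin 1 (Set.Ioi 1)) (nhds (1 / Real.sqrt 2)) ∧
    Tendsto f atTop (nhds 1) := by
  have hsq {q : ℝ} (hq : q ∈ Ico (0:ℝ) 1) : q ^ 2 < 1 := pow_lt_one₀ hq.1 hq.2 two_ne_zero
  have hmem {p : ℝ} (hp : 1 < p) : f p ∈ Ico 0 1 := Ioo_subset_Ico_self (hf p hp).1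
  have hroot {p : ℝ} (hp : 1 < p) : ellipticGap p (f p) = 0 := by
    rw [ellipticGap_eq hp (hsq (hmem hp)), (hf p hp).2, sub_self]
  have hlt {p q : ℝ} (hp : 1 < p) (hq : q ∈ Ico 0 1) (h : ellipticGap p q < 0) : f p < q :=
    (ellipticGap_antitoneOn hp).reflect_lt hq (hmem hp) (by rwa [hroot hp])
  have hgt {p q : ℝ} (hp : 1 < p) (hq : q ∈ Ico 0 1) (h : 0 < ellipticGap p q) : q < f p :=
    (ellipticGap_antitoneOn hp).reflect_lt (hmem hp) hq (by rwa [hroot hp])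
  have hhalf {p : ℝ} (hp : 1 < p) : 1 / 2 < f p ^ 2 :=
    lt_of_not_ge fun h => (ellipticGap_pos hp h).ne' (hroot hp)
  refine ⟨fun a ha b hb hab => hlt ha (hmem hb)
    (ellipticGap_neg_of_lt ha hab (hhalf hb) (hsq (hmem hb)) (hroot hb).le), ?_, ?_⟩
  · refine tendsto_order.2 ⟨fun b hb => eventually_nhdsWithin_of_forall fun p hp =>
      hb.trans ((one_div_sqrt_two_lt_iff (hf p hp).1.1).2 (hhalf hp)), fun b hb => ?_⟩
    obtain ⟨q, hq, hqb⟩ :=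
      exists_between (lt_min hb ((one_div_sqrt_two_lt_iff one_pos).2 (by norm_num)))
    have hq0 : 0 < q := (by positivity : (0:ℝ) < 1 / √2).trans hq
    have hqI : q ∈ Ico (0:ℝ) 1 := ⟨hq0.le, hqb.trans_le (min_le_right _ _)⟩
    filter_upwards [(tendsto_ellipticGap_nhdsGT_one ((one_div_sqrt_two_lt_iff hq0).1 hq)
      (hsq hqI)).eventually_lt_atBot 0, self_mem_nhdsWithin] with p hneg hp
    exact (hlt hp hqI hneg).trans (hqb.trans_le (min_le_left _ _))
  · refine tendsto_order.2 ⟨fun b hb => ?_, fun b hb =>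
      eventually_atTop.2 ⟨2, fun p hp => (hf p (by linarith)).1.2.trans hb⟩⟩
    obtain ⟨q, hq, hq1⟩ := exists_between (max_lt hb zero_lt_one)
    have hqI : q ∈ Ico (0:ℝ) 1 := ⟨(le_max_right _ _).trans hq.le, hq1⟩
    filter_upwards [(tendsto_ellipticGap_atTop (hsq hqI)).eventually_const_lt
      (sqrt_pos.2 (by linarith [hsq hqI])), eventually_gt_atTop 1] with p hpos hp
    exact ((le_max_left _ _).trans_lt hq).trans (hgt hp hqI hpos)
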